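/- Let k be a field, V and W finite-dimensional k-vector spaces, and let (f, g) be a nilpotent pair, i.e. f : V →ₗ[k] W, g : W →ₗ[k] V with g ∘ f nilpotent. If v ∈ V and w ∈ W are both balanced vectors, then T[v] ⊓ T[g w] = ⊥ in V and T'[f v] ⊓ T'[w] = ⊥ in W; consequently the sums T[v] + T[g w] in V and T'[f v] + T'[w] in W are internal direct sums. -/

import Mathlib

/-- `orbitSpan T v` is the submodule `T[v]` spanned by `{T^i v : i ∈ ℕ}`. -/
def orbitSpan {k V : Type*} [Field k] [AddCommGroup V] [Module k V]
    (T : V →ₗ[k] V) (v : V) : Submodule k V :=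
  Submodule.span k (Set.range fun i : ℕ => (T ^ i) v)

/-!
A balanced vector `v` is one on which `f` does not lose dimension, i.e. `f` is injective on
`T[v]`; likewise `g` is injective on `T'[w]` for balanced `w`. The intersection
`U = T[v] ⊓ T[g w]` is `T`-stable and `T` is nilpotent, so `U = ⊥` as soon as `T` is injective
on `U`. If `x = g y ∈ U` with `y ∈ T'[w]` and `T x = g (f (g y)) = 0`, then injectivity of `g`
on `T'[w] ∋ f (g y)` gives `f x = 0`, and injectivity of `f` on `T[v]` gives `x = 0`.
The statement in `W` is the same one with the roles of `(f, v)` and `(g, w)` exchanged.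
-/

open LinearMap Submodule

theorem Submodule.eq_bot_of_disjoint_ker {R M : Type*} [Semiring R] [AddCommMonoid M]
    [Module R M] {T : Module.End R M} (hT : IsNilpotent T) {U : Submodule R M}
    (hU : U ≤ U.comap T) (h : Disjoint U (ker T)) : U = ⊥ := by
  obtain ⟨n, hn⟩ := hT
  have eq_zero_of_pow_eq_zero : ∀ m : ℕ, ∀ x ∈ U, (T ^ m) x = 0 → x = 0 := by
    intro m
    induction m with
    | zero => simp
    | succ m ih =>
      intro x hx hxm
      rw [pow_succ, Module.End.mul_apply] at hxm
      exact disjoint_def.1 h x hx (ih (T x) (hU hx) hxm)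
  exact eq_bot_iff.2 fun x hx => (mem_bot R).2 (eq_zero_of_pow_eq_zero n x hx (by rw [hn]; rfl))

noncomputable def Submodule.prodEquivSupOfDisjoint {R M : Type*} [Ring R] [AddCommGroup M]
    [Module R M] {p q : Submodule R M} (h : Disjoint p q) : (p × q) ≃ₗ[R] ↥(p ⊔ q) :=
  have hinj : Function.Injective (p.subtype.coprod q.subtype) := by
    rw [← LinearMap.ker_eq_bot, ker_coprod_of_disjoint_range _ _ (by simpa using h)]
    simp
  (LinearEquiv.ofInjective _ hinj).trans (LinearEquiv.ofEq _ _ (by simp [range_coprod]))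

section OrbitSpan

variable {k V W : Type*} [Field k] [AddCommGroup V] [Module k V] [AddCommGroup W] [Module k W]

theorem orbitSpan_le_comap (T : Module.End k V) (v : V) :
    orbitSpan T v ≤ (orbitSpan T v).comap T :=
  span_le.2 <| Set.range_subset_iff.2 fun i => subset_span ⟨i + 1, congrArg (· v) (pow_succ' T i)⟩

theorem map_orbitSpan_of_comp_eq {T : Module.End k V} {T' : Module.End k W} {f : V →ₗ[k] W}
    (h : T' ∘ₗ f = f ∘ₗ T) (v : V) :
    (orbitSpan T v).map f = orbitSpan T' (f v) := by
  rw [orbitSpan, orbitSpan, Submodule.map_span, ← Set.range_comp]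
  congr 2
  funext i
  exact (LinearMap.congr_fun (Module.End.commute_pow_left_of_commute h i) v).symm

theorem map_orbitSpan_comp (f : V →ₗ[k] W) (g : W →ₗ[k] V) (v : V) :
    (orbitSpan (g ∘ₗ f) v).map f = orbitSpan (f ∘ₗ g) (f v) :=
  map_orbitSpan_of_comp_eq (LinearMap.comp_assoc f g f) v

theorem isNilpotent_comp_swap {f : V →ₗ[k] W} {g : W →ₗ[k] V} (h : IsNilpotent (g ∘ₗ f)) :
    IsNilpotent (f ∘ₗ g) := by
  obtain ⟨n, hn⟩ := h
  refine ⟨n + 1, ?_⟩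
  rw [pow_succ, Module.End.mul_eq_comp, ← LinearMap.comp_assoc,
    Module.End.commute_pow_left_of_commute (LinearMap.comp_assoc f g f), hn, comp_zero, zero_comp]

theorem disjoint_orbitSpan_orbitSpan_comp {f : V →ₗ[k] W} {g : W →ₗ[k] V}
    (hnil : IsNilpotent (g ∘ₗ f)) {v : V} {w : W}
    (hv : Disjoint (orbitSpan (g ∘ₗ f) v) (ker f)) (hw : Disjoint (orbitSpan (f ∘ₗ g) w) (ker g)) :
    Disjoint (orbitSpan (g ∘ₗ f) v) (orbitSpan (g ∘ₗ f) (g w)) := by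
  refine disjoint_iff.2 (eq_bot_of_disjoint_ker hnil ?_ ?_)
  · exact (inf_le_inf (orbitSpan_le_comap _ v) (orbitSpan_le_comap _ (g w))).trans_eq
      (comap_inf _ _ _).symm
  · refine disjoint_def.2 fun x hx hTx => ?_
    obtain ⟨hxv, hxw⟩ := mem_inf.1 hx
    rw [← map_orbitSpan_comp g f w] at hxw
    obtain ⟨y, hy, rfl⟩ := hxw
    have hfgy : f (g y) = 0 :=
      disjoint_def.1 hw _ (orbitSpan_le_comap (f ∘ₗ g) w hy) hTx
    exact disjoint_def.1 hv _ hxv hfgy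

theorem disjoint_orbitSpan_ker_of_finrank_eq [FiniteDimensional k V] (f : V →ₗ[k] W) (g : W →ₗ[k] V) (v : V)
    (hv : Module.finrank k (orbitSpan (g ∘ₗ f) v) = Module.finrank k (orbitSpan (f ∘ₗ g) (f v))) :
    Disjoint (orbitSpan (g ∘ₗ f) v) (ker f) :=
  disjoint_ker_of_finrank_le f (by rw [map_orbitSpan_comp, hv])

end OrbitSpan

theorem balanced_balanced_orbitSpans_disjoint
    (k V W : Type*) [Field k] [AddCommGroup V] [Module k V] [FiniteDimensional k V]
    [AddCommGroup W] [Module k W] [FiniteDimensional k W]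
    (f : V →ₗ[k] W) (g : W →ₗ[k] V) (hnil : IsNilpotent (g ∘ₗ f))
    (v : V) (w : W)
    (hv : Module.finrank k (orbitSpan (g ∘ₗ f) v) =
      Module.finrank k (orbitSpan (f ∘ₗ g) (f v)))
    (hw : Module.finrank k (orbitSpan (f ∘ₗ g) w) =
      Module.finrank k (orbitSpan (g ∘ₗ f) (g w))) :
    orbitSpan (g ∘ₗ f) v ⊓ orbitSpan (g ∘ₗ f) (g w) = ⊥ ∧
    orbitSpan (f ∘ₗ g) (f v) ⊓ orbitSpan (f ∘ₗ g) w = ⊥ ∧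
    Nonempty ((↥(orbitSpan (g ∘ₗ f) v) × ↥(orbitSpan (g ∘ₗ f) (g w))) ≃ₗ[k]
      ↥(orbitSpan (g ∘ₗ f) v ⊔ orbitSpan (g ∘ₗ f) (g w))) ∧
    Nonempty ((↥(orbitSpan (f ∘ₗ g) (f v)) × ↥(orbitSpan (f ∘ₗ g) w)) ≃ₗ[k]
      ↥(orbitSpan (f ∘ₗ g) (f v) ⊔ orbitSpan (f ∘ₗ g) w)) := by
  have hv' := disjoint_orbitSpan_ker_of_finrank_eq f g v hv
  have hw' := disjoint_orbitSpan_ker_of_finrank_eq g f w hw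
  have hV := disjoint_orbitSpan_orbitSpan_comp hnil hv' hw'
  have hW := (disjoint_orbitSpan_orbitSpan_comp (isNilpotent_comp_swap hnil) hw' hv').symm
  exact ⟨hV.eq_bot, hW.eq_bot, ⟨prodEquivSupOfDisjoint hV⟩, ⟨prodEquivSupOfDisjoint hW⟩⟩
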